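/- Let a, b ∈ L^∞(ℝ) and let ν > 0. With e_μ(t) := e^{iμt}, the following operator identity holds on L²(ℝ⁺): W(a) + H(b) = (W(a·e_{−ν/2}) + H(b·e_{ν/2})) ∘ W(e_{ν/2}). -/

import Mathlib

/-! With `c = ν/2 ≥ 0`, the Fourier multiplier `W⁰(e_c)` is translation by `c`, because `𝓕`
turns translation into multiplication by `e_c`. Translation to the right maps `L²(ℝ⁺)` into
itself, so `W(e_c)` is its restriction and `W(s) W(e_c) = W(s e_c)`. Since the reflection `J`
commutes with `𝓕`, `J W⁰(e_c) = W⁰(e_{-c}) J`, whence `H(s) W(e_c) = H(s e_{-c})`. -/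

open MeasureTheory Complex Filter Set

noncomputable section

namespace WienerHopf

/-- The space `L²(ℝ;ℂ)`. -/
abbrev L2 : Type := Lp ℂ 2 (volume : Measure ℝ)

open Classical in
/-- Multiplication by a function `a : ℝ → ℂ`, as a bounded operator on `L²(ℝ)`.
(It is defined to be `0` in the degenerate case where `a` is not essentially bounded.) -/
def mul (a : ℝ → ℂ) : L2 →L[ℂ] L2 :=
  if h : MemLp a ⊤ (volume : Measure ℝ) then
    LinearMap.mkContinuous
      { toFun := fun f => ((Lp.memLp f).smul (p := ⊤) (r := 2) h).toLp (a • (f : ℝ → ℂ))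
        map_add' := by
          intro f g
          rw [← MemLp.toLp_add]
          apply Lp.ext
          filter_upwards [MemLp.coeFn_toLp ((Lp.memLp (f + g)).smul (p := ⊤) (r := 2) h),
            MemLp.coeFn_toLp (((Lp.memLp f).smul (p := ⊤) (r := 2) h).add
              ((Lp.memLp g).smul (p := ⊤) (r := 2) h)),
            Lp.coeFn_add f g] with t h1 h2 h3
          rw [h1, h2]
          simp only [Pi.smul_apply, smul_eq_mul, Pi.mul_apply, Pi.add_apply]
          rw [h3]
          simp [Pi.add_apply, mul_add]
        map_smul' := by
          intro m f
          simp only [RingHom.id_apply]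
          rw [← MemLp.toLp_const_smul]
          apply Lp.ext
          filter_upwards [MemLp.coeFn_toLp ((Lp.memLp (m • f)).smul (p := ⊤) (r := 2) h),
            MemLp.coeFn_toLp (((Lp.memLp f).smul (p := ⊤) (r := 2) h).const_smul m),
            Lp.coeFn_smul m f] with t h1 h2 h3
          rw [h1, h2]
          simp only [Pi.smul_apply, smul_eq_mul, Pi.mul_apply]
          rw [h3]
          simp only [Pi.smul_apply, smul_eq_mul]
          ring
        }
      (eLpNorm a ⊤ (volume : Measure ℝ)).toReal
      (by
        intro f
        simp only [LinearMap.coe_mk, AddHom.coe_mk]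
        rw [Lp.norm_toLp, Lp.norm_def]
        have hle := eLpNorm_smul_le_mul_eLpNorm (Lp.aestronglyMeasurable f) h.1
          (p := ⊤) (q := 2) (r := 2)
        calc (eLpNorm (a • (f : ℝ → ℂ)) 2 (volume : Measure ℝ)).toReal
            ≤ (eLpNorm a ⊤ (volume : Measure ℝ) * eLpNorm (f : ℝ → ℂ) 2 volume).toReal := by
              apply ENNReal.toReal_mono _ hle
              exact ENNReal.mul_ne_top h.2.ne (Lp.eLpNorm_lt_top f).ne
          _ = (eLpNorm a ⊤ (volume : Measure ℝ)).toReal *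
              (eLpNorm (f : ℝ → ℂ) 2 (volume : Measure ℝ)).toReal := ENNReal.toReal_mul)
  else 0

theorem mul_coeFn {a : ℝ → ℂ} (h : MemLp a ⊤ (volume : Measure ℝ)) (f : L2) :
    (mul a f : ℝ → ℂ) =ᵐ[volume] fun t => a t * f t := by
  rw [mul, dif_pos h]
  show ⇑(((Lp.memLp f).smul (p := ⊤) (r := 2) h).toLp (a • (f : ℝ → ℂ))) =ᵐ[volume]
    fun t => a t * f t
  exact (MemLp.coeFn_toLp _).trans
    (Eventually.of_forall fun t => by simp [Pi.smul_apply])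

/-- `(-t)`-reflection is measure preserving. -/
theorem negMP : MeasurePreserving (fun t : ℝ => -t) volume volume :=
  Measure.measurePreserving_neg (volume : Measure ℝ)

/-- The reflection operator `(Jφ)(t) = φ(-t)` on `L²(ℝ)`. -/
def reflect : L2 →L[ℂ] L2 :=
  LinearMap.mkContinuous
    { toFun := ⇑(Lp.compMeasurePreserving (fun t : ℝ => -t) negMP)
      map_add' := fun f g => map_add _ f g
      map_smul' := by
        intro m g
        simp only [RingHom.id_apply]
        apply Lp.ext
        filter_upwards [Lp.coeFn_compMeasurePreserving (f := fun t : ℝ => -t) (m • g) negMP,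
          Lp.coeFn_smul m (Lp.compMeasurePreserving (fun t : ℝ => -t) negMP g),
          Lp.coeFn_compMeasurePreserving (f := fun t : ℝ => -t) g negMP,
          negMP.quasiMeasurePreserving.ae_eq_comp (Lp.coeFn_smul m g)] with t h1 h2 h3 h4
        rw [h1, h2, h4]
        simp only [Function.comp_apply, Pi.smul_apply, smul_eq_mul]
        rw [h3]
        simp only [Function.comp_apply]
      }
    1
    (by
      intro g
      rw [one_mul]
      exact le_of_eq (Lp.norm_compMeasurePreserving g _))

theorem reflect_coeFn (g : L2) :
    (reflect g : ℝ → ℂ) =ᵐ[volume] fun t => g (-t) :=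
  Lp.coeFn_compMeasurePreserving (f := fun t : ℝ => -t) g negMP

/-- The indicator function of `(0,∞)`. -/
def chiPlus : ℝ → ℂ := Set.indicator (Set.Ioi (0 : ℝ)) (fun _ => 1)

theorem chiPlus_memℒp : MemLp chiPlus ⊤ (volume : Measure ℝ) :=
  (memLp_top_const (1 : ℂ)).indicator measurableSet_Ioi

/-- The subspace of `L²(ℝ)` consisting of functions vanishing a.e. on `(-∞,0)`;
it is identified with `L²(ℝ⁺)`. -/
def posSubspace : Submodule ℂ L2 where
  carrier := {f : L2 | ∀ᵐ t : ℝ ∂volume, t < 0 → (f : ℝ → ℂ) t = 0}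
  zero_mem' := by
    filter_upwards [Lp.coeFn_zero ℂ 2 (volume : Measure ℝ)] with t ht _
    simp [ht]
  add_mem' := by
    intro f g hf hg
    filter_upwards [hf, hg, Lp.coeFn_add f g] with t h1 h2 h3 hlt
    rw [h3]
    simp [Pi.add_apply, h1 hlt, h2 hlt]
  smul_mem' := by
    intro m f hf
    filter_upwards [hf, Lp.coeFn_smul m f] with t h1 h2 hlt
    rw [h2]
    simp [Pi.smul_apply, h1 hlt]

/-- `L²(ℝ⁺)`, realized as the subspace of `L²(ℝ)` of functions vanishing a.e. on `(-∞,0)`. -/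
abbrev Lp2Plus : Type := ↥posSubspace

theorem chiPlus_mul_mem (g : L2) : mul chiPlus g ∈ posSubspace := by
  filter_upwards [mul_coeFn chiPlus_memℒp g] with t ht hlt
  rw [ht, chiPlus, Set.indicator_of_notMem (by simpa using hlt.le), zero_mul]

/-- Compression of an operator on `L²(ℝ)` to the subspace `L²(ℝ⁺)`:
`φ ↦ χ₊ ⬝ (T φ)`. -/
def compress (T : L2 →L[ℂ] L2) : Lp2Plus →L[ℂ] Lp2Plus :=
  LinearMap.mkContinuous
    { toFun := fun φ => ⟨mul chiPlus (T φ.val), chiPlus_mul_mem _⟩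
      map_add' := by intro φ ψ; apply Subtype.ext; simp
      map_smul' := by intro m φ; apply Subtype.ext; simp }
    ‖(mul chiPlus).comp T‖
    (by intro φ; exact ((mul chiPlus).comp T).le_opNorm φ.val)

theorem compress_coe (T : L2 →L[ℂ] L2) (φ : Lp2Plus) :
    (compress T φ : L2) = mul chiPlus (T φ.val) := rfl

/-- An abstract realization of the Fourier transform
`(𝓕φ)(ξ) = ∫ e^{iξx} φ(x) dx` on `L²(ℝ)` (together with its inverse
`(𝓕⁻¹ψ)(x) = (2π)⁻¹ ∫ e^{-iξx} ψ(ξ) dξ`): a continuous linear bijection of `L²(ℝ)`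
that is given by the above integral formulas on integrable functions.  By density
of `L¹ ∩ L²` in `L²`, these properties determine the operator uniquely, and by the
Fourier–Plancherel theory such an operator exists. -/
structure FourierL2 where
  equiv : L2 ≃L[ℂ] L2
  forward : ∀ φ : L2, Integrable (φ : ℝ → ℂ) volume →
      (equiv φ : ℝ → ℂ) =ᵐ[volume]
        fun ξ : ℝ => ∫ x : ℝ, Complex.exp (Complex.I * ξ * x) * φ x
  inverse : ∀ ψ : L2, Integrable (ψ : ℝ → ℂ) volume →
      (equiv.symm ψ : ℝ → ℂ) =ᵐ[volume]
        fun x : ℝ => (2 * Real.pi : ℂ)⁻¹ * ∫ ξ : ℝ, Complex.exp (-(Complex.I * ξ * x)) * ψ ξ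

/-- `W⁰(a) = 𝓕⁻¹ M_a 𝓕`, the convolution (Fourier multiplier) operator on `L²(ℝ)`. -/
def W0 (F : FourierL2) (a : ℝ → ℂ) : L2 →L[ℂ] L2 :=
  (F.equiv.symm : L2 →L[ℂ] L2).comp ((mul a).comp (F.equiv : L2 →L[ℂ] L2))

/-- The Wiener–Hopf operator `W(a) = χ₊ W⁰(a)` on `L²(ℝ⁺)`. -/
def W (F : FourierL2) (a : ℝ → ℂ) : Lp2Plus →L[ℂ] Lp2Plus :=
  compress (W0 F a)

/-- The Hankel operator `H(b) = χ₊ W⁰(b) J` on `L²(ℝ⁺)`. -/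
def H (F : FourierL2) (b : ℝ → ℂ) : Lp2Plus →L[ℂ] Lp2Plus :=
  compress ((W0 F b).comp reflect)

/-- `a` is invertible in the Banach algebra `L^∞(ℝ)`: `a ∈ L^∞`, `a ≠ 0` a.e.,
and the pointwise inverse `a⁻¹` again belongs to `L^∞`. -/
def InvertibleLinf (a : ℝ → ℂ) : Prop :=
  MemLp a ⊤ (volume : Measure ℝ) ∧ (∀ᵐ t : ℝ ∂volume, a t ≠ 0) ∧
    MemLp (fun t => (a t)⁻¹) ⊤ (volume : Measure ℝ)

/-- `(a,b)` is a matching pair: `a, b` are invertible in `L^∞(ℝ)` and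
`a(t)a(-t) = b(t)b(-t)` for a.e. `t`. -/
def MatchingPair (a b : ℝ → ℂ) : Prop :=
  InvertibleLinf a ∧ InvertibleLinf b ∧
    ∀ᵐ t : ℝ ∂volume, a t * a (-t) = b t * b (-t)

theorem memLp_top_exp_I_mul (c : ℝ) :
    MemLp (fun t : ℝ => exp (I * c * t)) ⊤ (volume : Measure ℝ) := by
  refine memLp_top_of_bound (by fun_prop) 1 (Eventually.of_forall fun t => ?_)
  simp [Complex.norm_exp, Complex.mul_re]

theorem mul_comp_mul {p q : ℝ → ℂ} (hp : MemLp p ⊤ (volume : Measure ℝ))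
    (hq : MemLp q ⊤ (volume : Measure ℝ)) :
    (mul p).comp (mul q) = mul (fun t => p t * q t) := by
  ext1 f
  apply Lp.ext
  filter_upwards [mul_coeFn hp (mul q f), mul_coeFn hq f, mul_coeFn (hq.mul' hp) f]
    with t hpq hq' hpq'
  rw [ContinuousLinearMap.comp_apply, hpq, hq', hpq', mul_assoc]

theorem reflect_comp_mul {d : ℝ → ℂ} (hd : MemLp d ⊤ (volume : Measure ℝ)) :
    reflect.comp (mul d) = (mul (fun t => d (-t))).comp reflect := by
  have hd_neg : MemLp (fun t => d (-t)) ⊤ (volume : Measure ℝ) := hd.comp_measurePreserving negMP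
  ext1 g
  apply Lp.ext
  filter_upwards [reflect_coeFn (mul d g),
    negMP.quasiMeasurePreserving.ae_eq_comp (mul_coeFn hd g),
    mul_coeFn hd_neg (reflect g), reflect_coeFn g]
    with t hJd hd' hdJ hJ
  rw [ContinuousLinearMap.comp_apply, ContinuousLinearMap.comp_apply, hJd, hdJ, hJ]
  exact hd'

theorem mul_chiPlus_of_mem {f : L2} (hf : f ∈ posSubspace) : mul chiPlus f = f := by
  apply Lp.ext
  filter_upwards [mul_coeFn chiPlus_memℒp f, hf, Measure.ae_ne volume 0]
    with t hχ hneg hne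
  rcases lt_or_gt_of_ne hne with ht | ht
  · rw [hχ, hneg ht, mul_zero]
  · rw [hχ, chiPlus, Set.indicator_of_mem (Set.mem_Ioi.mpr ht), one_mul]

theorem compress_comp_of_mapsTo {S T : L2 →L[ℂ] L2} (hT : ∀ f ∈ posSubspace, T f ∈ posSubspace) :
    compress (S.comp T) = (compress S).comp (compress T) := by
  ext1 φ
  apply Subtype.ext
  simp [compress_coe, mul_chiPlus_of_mem (hT _ φ.2)]

def translate (c : ℝ) : L2 →L[ℂ] L2 :=
  (Lp.compMeasurePreservingₗᵢ ℂ (fun x : ℝ => x - c)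
    (measurePreserving_sub_right volume c)).toContinuousLinearMap

theorem translate_coeFn (c : ℝ) (g : L2) :
    (translate c g : ℝ → ℂ) =ᵐ[volume] fun x => g (x - c) :=
  Lp.coeFn_compMeasurePreserving g _

theorem translate_mem_posSubspace {c : ℝ} (hc : 0 ≤ c) {f : L2} (hf : f ∈ posSubspace) :
    translate c f ∈ posSubspace := by
  filter_upwards [(measurePreserving_sub_right volume c).quasiMeasurePreserving.ae hf,
    translate_coeFn c f] with x hf' hx hneg
  rw [hx]
  exact hf' (by linarith)

theorem continuousLinearMap_ext_of_integrable {S T : L2 →L[ℂ] L2}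
    (h : ∀ f : L2, Integrable (f : ℝ → ℂ) volume → S f = T f) : S = T := by
  have hdense : DenseRange ((↑) : Lp.simpleFunc ℂ 2 (volume : Measure ℝ) → L2) :=
    Lp.simpleFunc.denseRange (by norm_num)
  refine ContinuousLinearMap.ext fun f => congrFun (hdense.equalizer S.continuous T.continuous
    (funext fun s => h _ ?_)) f
  exact ((SimpleFunc.memLp_iff_integrable (by norm_num) (by norm_num)).mp
    (Lp.simpleFunc.memLp s)).congr (Lp.simpleFunc.toSimpleFunc_eq_toFun s)

namespace FourierL2

variable (F : FourierL2)

theorem comp_reflect :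
    (F.equiv : L2 →L[ℂ] L2).comp reflect = reflect.comp (F.equiv : L2 →L[ℂ] L2) := by
  refine continuousLinearMap_ext_of_integrable fun f hf => ?_
  have hJf : Integrable (reflect f : ℝ → ℂ) volume :=
    (negMP.integrable_comp_of_integrable hf).congr (reflect_coeFn f).symm
  have hint : ∀ ξ : ℝ, ∫ x : ℝ, exp (I * ξ * x) * (reflect f : ℝ → ℂ) x =
      ∫ x : ℝ, exp (I * (-ξ : ℝ) * x) * f x := fun ξ => by
    rw [← integral_neg_eq_self]
    refine integral_congr_ae ?_
    filter_upwards [negMP.quasiMeasurePreserving.ae_eq_comp (reflect_coeFn f)] with x hx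
    simp only [Function.comp_apply, neg_neg] at hx
    rw [hx]
    push_cast
    ring_nf
  apply Lp.ext
  filter_upwards [F.forward _ hJf, reflect_coeFn (F.equiv f),
    negMP.quasiMeasurePreserving.ae_eq_comp (F.forward f hf)] with ξ hFJ hJF hF
  simp only [ContinuousLinearMap.comp_apply, ContinuousLinearEquiv.coe_coe]
  rw [hFJ, hint, hJF]
  exact hF.symm

theorem comp_translate (c : ℝ) :
    (F.equiv : L2 →L[ℂ] L2).comp (translate c) =
      (mul (fun ξ : ℝ => exp (I * c * ξ))).comp (F.equiv : L2 →L[ℂ] L2) := by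
  refine continuousLinearMap_ext_of_integrable fun f hf => ?_
  have hTf : Integrable (translate c f : ℝ → ℂ) volume :=
    ((measurePreserving_sub_right volume c).integrable_comp_of_integrable hf).congr
      (translate_coeFn c f).symm
  have hint : ∀ ξ : ℝ, ∫ x : ℝ, exp (I * ξ * x) * (translate c f : ℝ → ℂ) x =
      exp (I * c * ξ) * ∫ x : ℝ, exp (I * ξ * x) * f x := fun ξ => by
    rw [← integral_const_mul, ← integral_add_right_eq_self _ c]
    refine integral_congr_ae ?_
    filter_upwards [(measurePreserving_add_right volume c).quasiMeasurePreserving.ae_eq_comp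
      (translate_coeFn c f)] with x hx
    simp only [Function.comp_apply, add_sub_cancel_right] at hx
    rw [hx, ← mul_assoc, ← Complex.exp_add]
    push_cast
    ring_nf
  apply Lp.ext
  filter_upwards [F.forward _ hTf, mul_coeFn (memLp_top_exp_I_mul c) (F.equiv f),
    F.forward f hf] with ξ hFT hMF hF
  simp only [ContinuousLinearMap.comp_apply, ContinuousLinearEquiv.coe_coe]
  rw [hFT, hint, hMF, hF]

theorem reflect_comp_symm :
    reflect.comp (F.equiv.symm : L2 →L[ℂ] L2) = (F.equiv.symm : L2 →L[ℂ] L2).comp reflect := by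
  ext1 ψ
  apply F.equiv.injective
  simpa using DFunLike.congr_fun F.comp_reflect (F.equiv.symm ψ)

end FourierL2

section FourierMultiplier

variable (F : FourierL2)

theorem W0_comp_W0 {p q : ℝ → ℂ} (hp : MemLp p ⊤ (volume : Measure ℝ))
    (hq : MemLp q ⊤ (volume : Measure ℝ)) :
    (W0 F p).comp (W0 F q) = W0 F (fun t => p t * q t) := by
  ext1 f
  simp [W0, ← mul_comp_mul hp hq]

theorem reflect_comp_W0 {d : ℝ → ℂ} (hd : MemLp d ⊤ (volume : Measure ℝ)) :
    reflect.comp (W0 F d) = (W0 F (fun t => d (-t))).comp reflect := by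
  ext1 f
  have hJF := DFunLike.congr_fun F.comp_reflect f
  have hJd := DFunLike.congr_fun (reflect_comp_mul hd) (F.equiv f)
  have hJF' := DFunLike.congr_fun F.reflect_comp_symm (mul d (F.equiv f))
  simp only [ContinuousLinearMap.comp_apply, ContinuousLinearEquiv.coe_coe] at hJF hJd hJF'
  simp only [W0, ContinuousLinearMap.comp_apply, ContinuousLinearEquiv.coe_coe, hJF', hJd, hJF]

theorem W0_exp_I_mul (c : ℝ) : W0 F (fun ξ : ℝ => exp (I * c * ξ)) = translate c := by
  ext1 f
  have hFT := DFunLike.congr_fun (F.comp_translate c) f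
  simp only [ContinuousLinearMap.comp_apply, ContinuousLinearEquiv.coe_coe] at hFT
  simp only [W0, ContinuousLinearMap.comp_apply, ContinuousLinearEquiv.coe_coe, ← hFT,
    ContinuousLinearEquiv.symm_apply_apply]

end FourierMultiplier

section WienerHopfHankel

variable (F : FourierL2) {c : ℝ}

theorem compress_comp_W_exp_I_mul (S : L2 →L[ℂ] L2) (hc : 0 ≤ c) :
    (compress S).comp (W F (fun t => exp (I * c * t))) = compress (S.comp (translate c)) := by
  rw [W, W0_exp_I_mul, compress_comp_of_mapsTo fun f hf => translate_mem_posSubspace hc hf]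

theorem W_mul_exp_neg_comp_W_exp {a : ℝ → ℂ} (ha : MemLp a ⊤ (volume : Measure ℝ))
    (hc : 0 ≤ c) :
    (W F (fun t => a t * exp (-(I * c * t)))).comp (W F (fun t => exp (I * c * t))) = W F a := by
  have he_neg : MemLp (fun t : ℝ => exp (-(I * c * t))) ⊤ (volume : Measure ℝ) := by
    simpa using memLp_top_exp_I_mul (-c)
  rw [W, compress_comp_W_exp_I_mul F _ hc, ← W0_exp_I_mul F,
    W0_comp_W0 F (he_neg.mul' ha) (memLp_top_exp_I_mul c), W]
  congr
  funext t
  rw [mul_assoc, ← Complex.exp_add, neg_add_cancel, Complex.exp_zero, mul_one]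

theorem H_mul_exp_comp_W_exp {b : ℝ → ℂ} (hb : MemLp b ⊤ (volume : Measure ℝ))
    (hc : 0 ≤ c) :
    (H F (fun t => b t * exp (I * c * t))).comp (W F (fun t => exp (I * c * t))) = H F b := by
  have he_neg : MemLp (fun t : ℝ => exp (I * c * ↑(-t))) ⊤ (volume : Measure ℝ) := by
    simpa using memLp_top_exp_I_mul (-c)
  rw [H, compress_comp_W_exp_I_mul F _ hc, ← W0_exp_I_mul F, ContinuousLinearMap.comp_assoc,
    reflect_comp_W0 F (memLp_top_exp_I_mul c), ← ContinuousLinearMap.comp_assoc,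
    W0_comp_W0 F ((memLp_top_exp_I_mul c).mul' hb) he_neg, H]
  congr
  funext t
  rw [mul_assoc, ← Complex.exp_add, show I * c * t + I * c * ↑(-t) = 0 by push_cast; ring,
    Complex.exp_zero, mul_one]

end WienerHopfHankel

/-- For `a, b ∈ L^∞(ℝ)` and `ν > 0`:
`W(a) + H(b) = (W(a e^{-iνt/2}) + H(b e^{iνt/2})) W(e^{iνt/2})`. -/
theorem shift_factorization
    (F : FourierL2) (a b : ℝ → ℂ)
    (ha : MemLp a ⊤ (volume : Measure ℝ)) (hb : MemLp b ⊤ (volume : Measure ℝ))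
    (ν : ℝ) (hν : 0 < ν) :
    W F a + H F b =
      (W F (fun t => a t * Complex.exp (-(Complex.I * (ν / 2) * t))) +
        H F (fun t => b t * Complex.exp (Complex.I * (ν / 2) * t))).comp
        (W F (fun t => Complex.exp (Complex.I * (ν / 2) * t))) := by
  have hc : (ν : ℂ) / 2 = ((ν / 2 : ℝ) : ℂ) := by push_cast; rfl
  rw [hc, ContinuousLinearMap.add_comp, W_mul_exp_neg_comp_W_exp F ha (by positivity),
    H_mul_exp_comp_W_exp F hb (by positivity)]

end WienerHopf
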